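/- Let F ∈ ℂ[x,y] be quasi-homogeneous with respect to positive integer weights (w₁, w₂), and write F = x^A · y^B · S with x ∤ S and y ∤ S. Assume S is squarefree and nonconstant. Let α (resp. β) be the largest natural number such that x^α (resp. y^β) divides both ∂F/∂x and ∂F/∂y, and set P = (∂F/∂x)/(x^α y^β) and Q = (∂F/∂y)/(x^α y^β). Then every syzygy of the partial derivatives is a polynomial multiple of the Koszul syzygy of (P, Q): for all g, h ∈ ℂ[x,y] with g·(∂F/∂x) + h·(∂F/∂y) = 0 there exists r ∈ ℂ[x,y] with g = r·Q and h = −r·P. -/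

import Mathlib

/-!
By Euler's identity `w₁ x ∂ₓF + w₂ y ∂ᵧF = d F`, where `d ≠ 0` because the partials of `F` do not
both vanish, a prime `π` dividing both `P` and `Q` divides `F`. Maximality of `α` and `β` rules out
`π ~ x` and `π ~ y`, so `π ∣ S`; since `S` is squarefree, `π` then divides its own partial
derivatives, which forces `π` to be constant. Hence `P` and `Q` are coprime, and every syzygy
`g P + h Q = 0` of two coprime elements is a multiple of the Koszul syzygy `(Q, -P)`.
-/

open MvPolynomial

section Derivation

variable {R A : Type*} [CommRing R] [CommRing A] [Algebra R A] (D : Derivation R A A)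
  {π M S : A}

theorem Prime.dvd_derivation_of_dvd_derivation_mul (hπ : Prime π) (hπS : π ∣ S)
    (hπM : ¬ π ∣ M) (h : π ∣ D (M * S)) : π ∣ D S := by
  rw [D.leibniz, smul_eq_mul, smul_eq_mul, dvd_add_left (hπS.mul_right _)] at h
  exact (hπ.dvd_or_dvd h).resolve_left hπM

theorem Prime.dvd_derivation_self_of_squarefree (hπ : Prime π) (hS : Squarefree S)
    (hπS : π ∣ S) (h : π ∣ D S) : π ∣ D π := by
  obtain ⟨T, rfl⟩ := hπS
  have hπT : ¬ π ∣ T := fun hπT => hπ.not_isUnit (hS π (mul_dvd_mul_left π hπT))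
  rw [D.leibniz, smul_eq_mul, smul_eq_mul, dvd_add_right (dvd_mul_right _ _)] at h
  exact (hπ.dvd_or_dvd h).resolve_left hπT

end Derivation

theorem IsRelPrime.exists_eq_mul_of_mul_add_mul_eq_zero {R : Type*} [CommRing R] [IsDomain R]
    [DecompositionMonoid R] {P Q g h : R} (hPQ : IsRelPrime P Q) (hsyz : g * P + h * Q = 0) :
    ∃ r, g = r * Q ∧ h = -r * P := by
  rcases eq_or_ne Q 0 with rfl | hQ
  · obtain ⟨u, rfl⟩ := isRelPrime_zero_right.1 hPQ
    refine ⟨-h * ↑u⁻¹, ?_, by simp⟩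
    simpa using hsyz
  · obtain ⟨r, rfl⟩ : Q ∣ g := hPQ.symm.dvd_of_dvd_mul_right ⟨-h, by linear_combination hsyz⟩
    refine ⟨r, mul_comm _ _, ?_⟩
    have : Q * (h + r * P) = 0 := by linear_combination hsyz
    linear_combination (mul_eq_zero.1 this).resolve_left hQ

namespace MvPolynomial

variable {σ R : Type*}

theorem degreeOf_pderiv_lt [CommSemiring R] {i : σ} {p : MvPolynomial σ R}
    (h : pderiv i p ≠ 0) : degreeOf i (pderiv i p) < degreeOf i p := by
  have hle : ∀ m ∈ (pderiv i p).support, m i + 1 ≤ degreeOf i p := fun m hm => by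
    rw [mem_support_iff, coeff_pderiv] at hm
    simpa using monomial_le_degreeOf i (mem_support_iff.2 (left_ne_zero_of_mul hm))
  obtain ⟨m, hm⟩ := support_nonempty.2 h
  exact (degreeOf_lt_iff (by have := hle m hm; omega)).2 fun m hm => hle m hm

theorem pderiv_eq_zero_of_dvd [CommSemiring R] [NoZeroDivisors R] {i : σ}
    {p : MvPolynomial σ R} (h : p ∣ pderiv i p) : pderiv i p = 0 := by
  by_contra hne
  obtain ⟨q, hq⟩ := h
  have hp : p ≠ 0 := left_ne_zero_of_mul (hq ▸ hne)
  have hq0 : q ≠ 0 := right_ne_zero_of_mul (hq ▸ hne)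
  have := degreeOf_pderiv_lt hne
  rw [hq, degreeOf_mul_eq hp hq0] at this
  omega

theorem eq_C_of_forall_pderiv_eq_zero [CommSemiring R] [NoZeroDivisors R] [CharZero R]
    {p : MvPolynomial σ R} (h : ∀ i, pderiv i p = 0) : p = C (coeff 0 p) := by
  classical
  ext m
  rcases eq_or_ne m 0 with rfl | hm
  · simp
  obtain ⟨i, hi⟩ : ∃ i, m i ≠ 0 := by simpa [Finsupp.ext_iff] using hm
  have hcoeff := congrArg (coeff (m - Finsupp.single i 1)) (h i)
  rw [coeff_pderiv, tsub_add_cancel_of_le (Finsupp.single_le_iff.2 (Nat.one_le_iff_ne_zero.2 hi)),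
    coeff_zero] at hcoeff
  rw [coeff_C, if_neg (Ne.symm hm)]
  exact (mul_eq_zero.1 hcoeff).resolve_right (Nat.cast_add_one_ne_zero _)

theorem not_forall_prime_dvd_pderiv_mul {K : Type*} [Field K] [CharZero K]
    {π M S : MvPolynomial σ K} (hπ : Prime π) (hS : Squarefree S) (hπS : π ∣ S)
    (hπM : ¬ π ∣ M) : ¬ ∀ i, π ∣ pderiv i (M * S) := fun h => by
  have hconst := eq_C_of_forall_pderiv_eq_zero fun i => pderiv_eq_zero_of_dvd <|
    hπ.dvd_derivation_self_of_squarefree _ hS hπS <|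
      hπ.dvd_derivation_of_dvd_derivation_mul _ hπS hπM (h i)
  rw [hconst] at hπ
  rcases eq_or_ne (coeff 0 π) 0 with h0 | h0
  · exact not_prime_zero (by rwa [h0, C_0] at hπ)
  · exact hπ.not_isUnit ((isUnit_iff_ne_zero.2 h0).map C)

theorem IsWeightedHomogeneous.dvd_of_forall_dvd_pderiv [Fintype σ] {K : Type*} [Field K]
    [CharZero K] {w : σ → ℕ} {n : ℕ} {φ π : MvPolynomial σ K} (hφ : φ.IsWeightedHomogeneous w n)
    (hn : n ≠ 0) (h : ∀ i, π ∣ pderiv i φ) : π ∣ φ := by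
  have euler := hφ.sum_weight_X_mul_pderiv
  simp_rw [nsmul_eq_mul] at euler
  have hdvd : π ∣ (n : MvPolynomial σ K) * φ :=
    euler ▸ Finset.dvd_sum fun i _ => ((h i).mul_left _).mul_left _
  have hunit : IsUnit (n : MvPolynomial σ K) := by
    rw [← map_natCast C]
    exact (isUnit_iff_ne_zero.2 (Nat.cast_ne_zero.2 hn)).map C
  exact hunit.dvd_mul_left.1 hdvd

end MvPolynomial

theorem isRelPrime_of_saturated_partials {K : Type*} [Field K] [CharZero K] {w : Fin 2 → ℕ}
    {d A B α β : ℕ} {F S P Q : MvPolynomial (Fin 2) K} (hF : F.IsWeightedHomogeneous w d)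
    (hd : d ≠ 0) (hfac : F = X 0 ^ A * X 1 ^ B * S) (hsqf : Squarefree S)
    (hαmax : ¬ (X 0 ^ (α + 1) ∣ pderiv 0 F ∧ X 0 ^ (α + 1) ∣ pderiv 1 F))
    (hβmax : ¬ (X 1 ^ (β + 1) ∣ pderiv 0 F ∧ X 1 ^ (β + 1) ∣ pderiv 1 F))
    (hP : pderiv 0 F = X 0 ^ α * X 1 ^ β * P) (hQ : pderiv 1 F = X 0 ^ α * X 1 ^ β * Q) :
    IsRelPrime P Q := by
  have hx : ¬ (X 0 ∣ P ∧ X 0 ∣ Q) := by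
    rintro ⟨⟨P', rfl⟩, ⟨Q', rfl⟩⟩
    exact hαmax ⟨⟨X 1 ^ β * P', by rw [hP]; ring⟩, ⟨X 1 ^ β * Q', by rw [hQ]; ring⟩⟩
  have hy : ¬ (X 1 ∣ P ∧ X 1 ∣ Q) := by
    rintro ⟨⟨P', rfl⟩, ⟨Q', rfl⟩⟩
    exact hβmax ⟨⟨X 0 ^ α * P', by rw [hP]; ring⟩, ⟨X 0 ^ α * Q', by rw [hQ]; ring⟩⟩
  refine WfDvdMonoid.isRelPrime_of_no_irreducible_factors
    (fun ⟨hP0, hQ0⟩ => hx ⟨hP0 ▸ dvd_zero _, hQ0 ▸ dvd_zero _⟩) fun π hirr hπP hπQ => ?_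
  have hπ : Prime π := UniqueFactorizationMonoid.irreducible_iff_prime.1 hirr
  have hπX : ∀ i, ¬ π ∣ X i := fun i hπi => by
    have hXπ := (hπ.associated_of_dvd X_prime hπi).symm.dvd
    fin_cases i
    exacts [hx ⟨hXπ.trans hπP, hXπ.trans hπQ⟩, hy ⟨hXπ.trans hπP, hXπ.trans hπQ⟩]
  have hπM : ¬ π ∣ X 0 ^ A * X 1 ^ B := fun h => by
    rcases hπ.dvd_or_dvd h with h | h <;> exact hπX _ (hπ.dvd_of_dvd_pow h)
  have hπpderiv : ∀ i, π ∣ pderiv i F :=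
    Fin.forall_fin_two.2 ⟨hP ▸ hπP.mul_left _, hQ ▸ hπQ.mul_left _⟩
  have hπS : π ∣ S := by
    have hπF := hF.dvd_of_forall_dvd_pderiv hd hπpderiv
    rw [hfac] at hπF
    exact (hπ.dvd_or_dvd hπF).resolve_left hπM
  exact not_forall_prime_dvd_pderiv_mul hπ hsqf hπS hπM (hfac ▸ hπpderiv)

theorem syzygy_of_partials_is_multiple_of_koszul_general
    (w₁ w₂ d : ℕ) (hw₁ : 0 < w₁) (hw₂ : 0 < w₂)
    (F S P Q : MvPolynomial (Fin 2) ℂ) (A B α β : ℕ)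
    (hqh : ∀ m ∈ F.support, w₁ * m 0 + w₂ * m 1 = d)
    (hfac : F = X 0 ^ A * X 1 ^ B * S)
    (hsqf : Squarefree S)
    (hαmax : ¬ (X 0 ^ (α + 1) ∣ pderiv 0 F ∧ X 0 ^ (α + 1) ∣ pderiv 1 F))
    (hβmax : ¬ (X 1 ^ (β + 1) ∣ pderiv 0 F ∧ X 1 ^ (β + 1) ∣ pderiv 1 F))
    (hP : pderiv 0 F = X 0 ^ α * X 1 ^ β * P)
    (hQ : pderiv 1 F = X 0 ^ α * X 1 ^ β * Q) :
    ∀ g h : MvPolynomial (Fin 2) ℂ,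
      g * pderiv 0 F + h * pderiv 1 F = 0 →
      ∃ r : MvPolynomial (Fin 2) ℂ, g = r * Q ∧ h = -r * P := by
  have hF : F.IsWeightedHomogeneous ![w₁, w₂] d := fun m hm => by
    simpa [Finsupp.weight_apply, Finsupp.sum_fintype, mul_comm] using hqh m (mem_support_iff.2 hm)
  have hd : d ≠ 0 := by
    rintro rfl
    have hC : F = C (coeff 0 F) := by
      rw [← weightedHomogeneousComponent_zero F (w := ![w₁, w₂])
        (Fin.forall_fin_two.2 ⟨hw₁.ne', hw₂.ne'⟩), hF.weightedHomogeneousComponent_same]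
    exact hαmax (by rw [hC, pderiv_C, pderiv_C]; simp)
  have hPQ := isRelPrime_of_saturated_partials hF hd hfac hsqf hαmax hβmax hP hQ
  refine fun g h hsyz => hPQ.exists_eq_mul_of_mul_add_mul_eq_zero ?_
  have hsat : X 0 ^ α * X 1 ^ β * (g * P + h * Q) = 0 := by
    rw [hP, hQ] at hsyz
    linear_combination hsyz
  exact (mul_eq_zero.1 hsat).resolve_left (by simp [X_ne_zero])

/-- Main assertion of Lemma 4.1 (zeroSum), single-facet case: every syzygy of the
partial derivatives of a quasi-homogeneous polynomial with squarefree nonconstant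
saturation is a polynomial multiple of the Koszul syzygy of the saturated partials. -/
theorem syzygy_of_partials_is_multiple_of_koszul
    (w₁ w₂ d : ℕ) (hw₁ : 0 < w₁) (hw₂ : 0 < w₂)
    (F S P Q : MvPolynomial (Fin 2) ℂ) (A B α β : ℕ)
    (hqh : ∀ m ∈ F.support, w₁ * m 0 + w₂ * m 1 = d)
    (hfac : F = X 0 ^ A * X 1 ^ B * S)
    (hxS : ¬ X 0 ∣ S) (hyS : ¬ X 1 ∣ S)
    (hsqf : Squarefree S) (hS_nonconst : S.totalDegree ≠ 0)
    (hα : X 0 ^ α ∣ pderiv 0 F ∧ X 0 ^ α ∣ pderiv 1 F)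
    (hαmax : ¬ (X 0 ^ (α + 1) ∣ pderiv 0 F ∧ X 0 ^ (α + 1) ∣ pderiv 1 F))
    (hβ : X 1 ^ β ∣ pderiv 0 F ∧ X 1 ^ β ∣ pderiv 1 F)
    (hβmax : ¬ (X 1 ^ (β + 1) ∣ pderiv 0 F ∧ X 1 ^ (β + 1) ∣ pderiv 1 F))
    (hP : pderiv 0 F = X 0 ^ α * X 1 ^ β * P)
    (hQ : pderiv 1 F = X 0 ^ α * X 1 ^ β * Q) :
    ∀ g h : MvPolynomial (Fin 2) ℂ,
      g * pderiv 0 F + h * pderiv 1 F = 0 →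
      ∃ r : MvPolynomial (Fin 2) ℂ, g = r * Q ∧ h = -r * P :=
  syzygy_of_partials_is_multiple_of_koszul_general w₁ w₂ d hw₁ hw₂ F S P Q A B α β hqh hfac hsqf
    hαmax hβmax hP hQ
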